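/- arXiv:math/0011225 — 2 statements merged into one kernel-verified Lean document; each statement's English description precedes it below -/
import Mathlib

section
/- Let G be a finite simple graph on p ≥ 4 vertices that contains a vertex adjacent to all other vertices (a dominating vertex), and suppose the complement of G has at most Σ_{j=1}^{⌊p/2⌋} (p - 2j) edges. Then G is not bipartite. -/
lemma sumZ_aux (n m : ℕ) (h : 2 * m ≤ n) :
    ((∑ j ∈ Finset.Icc 1 m, (n - 2 * j) : ℕ) : ℤ) = m * n - m * (m + 1) := by
  induction m with
  | zero => simp
  | succ k ih =>
    rw [Finset.sum_Icc_succ_top (by omega : 1 ≤ k + 1), Nat.cast_add,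
      ih (by omega), Nat.cast_sub (by omega : 2 * (k + 1) ≤ n)]
    push_cast
    ring

/-- A finite simple graph on `p ≥ 4` vertices having a dominating vertex whose complement
has at most `∑_{j=1}^{⌊p/2⌋} (p - 2j)` edges is not bipartite (i.e. not 2-colorable). -/
theorem stmt_6 (p : ℕ) (hp : 4 ≤ p) (G : SimpleGraph (Fin p)) [DecidableRel G.Adj]
    (hdom : ∃ v : Fin p, ∀ w : Fin p, w ≠ v → G.Adj v w)
    (hcompl : Gᶜ.edgeFinset.card ≤ ∑ j ∈ Finset.Icc 1 (p / 2), (p - 2 * j)) :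
    ¬ G.Colorable 2 := by
  intro hcol
  obtain ⟨v, hv⟩ := hdom
  obtain C := hcol.some
  have hfin2 : ∀ a b c : Fin 2, a ≠ c → b ≠ c → a = b := by decide
  -- every vertex `w ≠ v` has degree ≥ p - 2 in `Gᶜ`
  have hdeg : ∀ w : Fin p, w ≠ v → p - 2 ≤ Gᶜ.degree w := by
    intro w hw
    have hsub : (Finset.univ.erase v).erase w ⊆ Gᶜ.neighborFinset w := by
      intro u hu
      rw [Finset.mem_erase, Finset.mem_erase] at hu
      obtain ⟨huw, huv, -⟩ := hu
      rw [SimpleGraph.mem_neighborFinset, SimpleGraph.compl_adj]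
      refine ⟨fun h => huw h.symm, fun hadj => ?_⟩
      have h1 : C w ≠ C v := (C.valid (hv w hw)).symm
      have h2 : C u ≠ C v := (C.valid (hv u huv)).symm
      exact C.valid hadj (hfin2 _ _ _ h1 h2)
    have hcard : ((Finset.univ.erase v).erase w).card = p - 2 := by
      rw [Finset.card_erase_of_mem (by simp [hw]),
        Finset.card_erase_of_mem (by simp), Finset.card_univ, Fintype.card_fin]
      omega
    calc p - 2 = ((Finset.univ.erase v).erase w).card := hcard.symm
      _ ≤ (Gᶜ.neighborFinset w).card := Finset.card_le_card hsub
  -- sum of degrees gives many edges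
  have hsum : (p - 1) * (p - 2) ≤ 2 * Gᶜ.edgeFinset.card := by
    rw [← SimpleGraph.sum_degrees_eq_twice_card_edges]
    calc (p - 1) * (p - 2)
        = ∑ _w ∈ Finset.univ.erase v, (p - 2) := by
          rw [Finset.sum_const, Finset.card_erase_of_mem (by simp),
            Finset.card_univ, Fintype.card_fin, smul_eq_mul]
      _ ≤ ∑ w ∈ Finset.univ.erase v, Gᶜ.degree w :=
          Finset.sum_le_sum (fun w hw => hdeg w (Finset.mem_erase.mp hw).1)
      _ ≤ ∑ w, Gᶜ.degree w :=
          Finset.sum_le_sum_of_subset (Finset.subset_univ _)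
  -- arithmetic contradiction
  set m := p / 2 with hm
  have h2m : 2 * m ≤ p := by omega
  have hS := sumZ_aux p m h2m
  have hc1 : ((p - 1) * (p - 2) : ℤ) ≤ 2 * (Gᶜ.edgeFinset.card : ℤ) := by
    have := hsum
    have h1 : ((p - 1) * (p - 2) : ℕ) = ((p : ℤ) - 1) * ((p : ℤ) - 2) := by
      push_cast [Nat.cast_sub (by omega : 1 ≤ p), Nat.cast_sub (by omega : 2 ≤ p)]
      ring
    calc ((p : ℤ) - 1) * ((p : ℤ) - 2) = ((p - 1) * (p - 2) : ℕ) := h1.symm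
      _ ≤ 2 * (Gᶜ.edgeFinset.card : ℤ) := by exact_mod_cast this
  have hc2 : (Gᶜ.edgeFinset.card : ℤ) ≤ (m : ℤ) * p - m * (m + 1) := by
    rw [← hS]; exact_mod_cast hcompl
  have hpar : p = 2 * m ∨ p = 2 * m + 1 := by omega
  have hm2 : 2 ≤ m := by omega
  have hkey : ((p : ℤ) - 1) * ((p : ℤ) - 2) ≤ 2 * ((m : ℤ) * p - m * (m + 1)) := by
    calc ((p : ℤ) - 1) * ((p : ℤ) - 2) ≤ 2 * (Gᶜ.edgeFinset.card : ℤ) := hc1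
      _ ≤ 2 * ((m : ℤ) * p - m * (m + 1)) := by linarith
  clear hS hsum hcompl hm hc1 hc2
  rcases hpar with hpe | hpe <;>
  · rw [hpe] at hkey
    push_cast at hkey
    nlinarith [sq_nonneg ((m : ℤ) - 1), hkey]
end

section
/- Let G be a finite simple graph on p ≥ 4 vertices with a dominating vertex, whose complement has at most Σ_{j=1}^{⌊p/2⌋} (p - 2j) edges. Then G contains a triangle. -/
lemma sum_aux_stmt10 (p : ℕ) : ∀ m : ℕ, 2 * m ≤ p →
    (∑ j ∈ Finset.Icc 1 m, (p - 2 * j)) + m * (m + 1) = m * p := by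
  intro m
  induction m with
  | zero => simp
  | succ n ih =>
    intro h
    rw [Finset.sum_Icc_succ_top (by omega : 1 ≤ n + 1)]
    have h2 : 2 * n ≤ p := by omega
    have := ih h2
    have e1 : (n + 1) * p = n * p + p := by ring
    have e2 : (n + 1) * (n + 1 + 1) = n * (n + 1) + 2 * (n + 1) := by ring
    omega

lemma arith_stmt10 (p : ℕ) (hp : 4 ≤ p) :
    2 * (∑ j ∈ Finset.Icc 1 (p / 2), (p - 2 * j)) < (p - 1) * (p - 2) := by
  set m := p / 2 with hm
  have h2m : 2 * m ≤ p := by omega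
  have hsum := sum_aux_stmt10 p m h2m
  obtain ⟨k, hk⟩ : ∃ k, p = 2 * k + 4 ∨ p = 2 * k + 5 := ⟨(p - 4) / 2, by omega⟩
  have hmk : m = k + 2 := by omega
  rcases hk with h | h
  · have f1 : m * (m + 1) = k * k + 5 * k + 6 := by rw [hmk]; ring
    have f2 : m * p = 2 * (k * k) + 8 * k + 8 := by rw [hmk, h]; ring
    have f3 : (p - 1) * (p - 2) = 4 * (k * k) + 10 * k + 6 := by
      have a1 : p - 1 = 2 * k + 3 := by omega
      have a2 : p - 2 = 2 * k + 2 := by omega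
      rw [a1, a2]; ring
    omega
  · have f1 : m * (m + 1) = k * k + 5 * k + 6 := by rw [hmk]; ring
    have f2 : m * p = 2 * (k * k) + 9 * k + 10 := by rw [hmk, h]; ring
    have f3 : (p - 1) * (p - 2) = 4 * (k * k) + 14 * k + 12 := by
      have a1 : p - 1 = 2 * k + 4 := by omega
      have a2 : p - 2 = 2 * k + 3 := by omega
      rw [a1, a2]; ring
    omega

/-- A finite simple graph on `p ≥ 4` vertices with a dominating vertex whose complement
has at most `∑_{j=1}^{⌊p/2⌋} (p - 2j)` edges contains a triangle (is not 3-clique-free). -/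
theorem stmt_10 (p : ℕ) (hp : 4 ≤ p) (G : SimpleGraph (Fin p)) [DecidableRel G.Adj]
    (hdom : ∃ v : Fin p, ∀ w : Fin p, w ≠ v → G.Adj v w)
    (hcompl : Gᶜ.edgeFinset.card ≤ ∑ j ∈ Finset.Icc 1 (p / 2), (p - 2 * j)) :
    ¬ G.CliqueFree 3 := by
  intro h3
  obtain ⟨v, hv⟩ := hdom
  classical
  have hdeg : ∀ w : Fin p, w ≠ v → p - 2 ≤ Gᶜ.degree w := by
    intro w hw
    have hsub : (Finset.univ.erase v).erase w ⊆ Gᶜ.neighborFinset w := by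
      intro x hx
      simp only [Finset.mem_erase, Finset.mem_univ, and_true] at hx
      obtain ⟨hxw, hxv⟩ := hx
      rw [SimpleGraph.mem_neighborFinset, SimpleGraph.compl_adj]
      refine ⟨fun he => hxw he.symm, fun hadj => ?_⟩
      exact h3 {v, w, x} (SimpleGraph.is3Clique_triple_iff.2 ⟨hv w hw, hv x hxv, hadj⟩)
    have := Finset.card_le_card hsub
    have hc : ((Finset.univ.erase v).erase w).card = p - 2 := by
      rw [Finset.card_erase_of_mem, Finset.card_erase_of_mem (Finset.mem_univ v)]
      · rw [Finset.card_univ, Fintype.card_fin]; omega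
      · simp [hw]
    rw [SimpleGraph.degree, ← hc]
    exact this
  have hsum : (p - 1) * (p - 2) ≤ ∑ w : Fin p, Gᶜ.degree w := by
    calc (p - 1) * (p - 2) = ∑ w ∈ Finset.univ.erase v, (p - 2) := by
          rw [Finset.sum_const, Finset.card_erase_of_mem (Finset.mem_univ v)]
          simp [Nat.smul_one_eq_cast]
      _ ≤ ∑ w ∈ Finset.univ.erase v, Gᶜ.degree w :=
          Finset.sum_le_sum fun w hw => hdeg w (Finset.mem_erase.1 hw).1
      _ ≤ ∑ w : Fin p, Gᶜ.degree w :=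
          Finset.sum_le_sum_of_subset (Finset.subset_univ _)
  rw [SimpleGraph.sum_degrees_eq_twice_card_edges] at hsum
  have := arith_stmt10 p hp
  omega
end
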